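/- arXiv:astro-ph/0211628 — 6 statements merged into one kernel-verified Lean document; each statement's English description precedes it below -/
import Mathlib

section
/- Consider the planar polytropic system dU/dλ = U(1−U)[(1−Q)(3−4U) − n Q(1−U)], dQ/dλ = Q(1−Q)[(2U−1)(1−Q) + Q(1−U)] with constant n = 5. Then the function Φ(U,Q) = U(4−7Q) − 3(1−2Q) − C U^{−1/2} Q^{−3/2} (1−U)^{3/2} (1−Q)^{5/2} satisfies dΦ/dλ = 0 along any solution with 0 < U < 1 and 0 < Q < 1, for every constant C. -/
/-!
With `A = (1-Q)(3-4U) - 5Q(1-U)` and `B = (2U-1)(1-Q) + Q(1-U)` the vector field is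
`U' = U(1-U)A`, `Q' = Q(1-Q)B`. Along it the weight `R = U^{-1/2} Q^{-3/2} (1-U)^{3/2} (1-Q)^{5/2}`
and the polynomial `P = U(4-7Q) - 3(1-2Q)` have the same logarithmic derivative
`L = -((1+2U)A + (3+2Q)B)/2`, so `Φ = P - C R` satisfies `Φ' = L Φ` and vanishes to first order
on its zero set.
-/

open Real

section LogDeriv

variable {f g : ℝ → ℝ} {x : ℝ}

theorem HasDerivAt.rpow_const_of_pos {f' : ℝ} (hf : HasDerivAt f f' x) (hx : 0 < f x) (p : ℝ) :
    HasDerivAt (fun t => f t ^ p) (p * f' / f x * f x ^ p) x := by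
  convert hf.rpow_const (p := p) (Or.inl hx.ne') using 1
  rw [rpow_sub_one hx.ne']
  ring

theorem HasDerivAt.mul_of_logDeriv {α β : ℝ} (hf : HasDerivAt f (α * f x) x)
    (hg : HasDerivAt g (β * g x) x) :
    HasDerivAt (fun t => f t * g t) ((α + β) * (f x * g x)) x :=
  (hf.mul hg).congr_deriv (by ring)

theorem HasDerivAt.sub_const_mul_of_logDeriv {L C : ℝ} (hf : HasDerivAt f (L * f x) x)
    (hg : HasDerivAt g (L * g x) x) (h0 : f x - C * g x = 0) :
    HasDerivAt (fun t => f t - C * g t) 0 x :=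
  (hf.sub (hg.const_mul C)).congr_deriv (by linear_combination L * h0)

end LogDeriv

section Polytrope

def polytropeU (n U Q : ℝ) : ℝ := U * (1 - U) * ((1 - Q) * (3 - 4 * U) - n * Q * (1 - U))

def polytropeQ (U Q : ℝ) : ℝ := Q * (1 - Q) * ((2 * U - 1) * (1 - Q) + Q * (1 - U))

variable {U Q : ℝ → ℝ} {l U' Q' : ℝ}

theorem hasDerivAt_weight (hU : HasDerivAt U U' l) (hQ : HasDerivAt Q Q' l)
    (hU0 : 0 < U l) (hU1 : U l < 1) (hQ0 : 0 < Q l) (hQ1 : Q l < 1) (a b c d : ℝ) :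
    HasDerivAt (fun t => U t ^ a * Q t ^ b * (1 - U t) ^ c * (1 - Q t) ^ d)
      ((a * U' / U l + b * Q' / Q l + c * -U' / (1 - U l) + d * -Q' / (1 - Q l))
        * (U l ^ a * Q l ^ b * (1 - U l) ^ c * (1 - Q l) ^ d)) l := by
  have hV : HasDerivAt (fun t => 1 - U t) (-U') l := by simpa using hU.const_sub 1
  have hW : HasDerivAt (fun t => 1 - Q t) (-Q') l := by simpa using hQ.const_sub 1
  exact (((hU.rpow_const_of_pos hU0 a).mul_of_logDeriv (hQ.rpow_const_of_pos hQ0 b)).mul_of_logDeriv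
    (hV.rpow_const_of_pos (sub_pos.2 hU1) c)).mul_of_logDeriv
    (hW.rpow_const_of_pos (sub_pos.2 hQ1) d)

theorem polytrope_five_logDeriv_eq {U Q : ℝ} (hU0 : U ≠ 0) (hU1 : 1 - U ≠ 0) (hQ0 : Q ≠ 0)
    (hQ1 : 1 - Q ≠ 0) :
    polytropeU 5 U Q * (4 - 7 * Q) + U * -(7 * polytropeQ U Q) - 3 * -(2 * polytropeQ U Q)
      = (-1 / 2 * polytropeU 5 U Q / U + -3 / 2 * polytropeQ U Q / Q
          + 3 / 2 * -polytropeU 5 U Q / (1 - U) + 5 / 2 * -polytropeQ U Q / (1 - Q))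
        * (U * (4 - 7 * Q) - 3 * (1 - 2 * Q)) := by
  unfold polytropeU polytropeQ
  field_simp
  ring

end Polytrope

/-- For the planar polytropic system with index `n = 5`, the function
`Φ(U,Q) = U(4−7Q) − 3(1−2Q) − C U^{−1/2} Q^{−3/2} (1−U)^{3/2} (1−Q)^{5/2}`
is conserved along solutions (its derivative along the flow vanishes on the
invariant level set `Φ = 0`), for every constant `C`. -/
theorem phi_conserved_n5
    (U Q : ℝ → ℝ) (l : ℝ)
    (hU01 : 0 < U l ∧ U l < 1) (hQ01 : 0 < Q l ∧ Q l < 1)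
    (hU : HasDerivAt U
      (U l * (1 - U l) * ((1 - Q l) * (3 - 4 * U l) - 5 * (Q l) * (1 - U l))) l)
    (hQ : HasDerivAt Q
      (Q l * (1 - Q l) * ((2 * U l - 1) * (1 - Q l) + Q l * (1 - U l))) l)
    (C : ℝ)
    (hΦ0 : U l * (4 - 7 * Q l) - 3 * (1 - 2 * Q l)
      - C * (U l) ^ (-(1:ℝ)/2) * (Q l) ^ (-(3:ℝ)/2)
        * (1 - U l) ^ ((3:ℝ)/2) * (1 - Q l) ^ ((5:ℝ)/2) = 0) :
    HasDerivAt (fun t => U t * (4 - 7 * Q t) - 3 * (1 - 2 * Q t)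
      - C * (U t) ^ (-(1:ℝ)/2) * (Q t) ^ (-(3:ℝ)/2)
        * (1 - U t) ^ ((3:ℝ)/2) * (1 - Q t) ^ ((5:ℝ)/2)) 0 l := by
  obtain ⟨hU0, hU1⟩ := hU01
  obtain ⟨hQ0, hQ1⟩ := hQ01
  change HasDerivAt U (polytropeU 5 (U l) (Q l)) l at hU
  change HasDerivAt Q (polytropeQ (U l) (Q l)) l at hQ
  have hR := hasDerivAt_weight hU hQ hU0 hU1 hQ0 hQ1 (-(1:ℝ)/2) (-(3:ℝ)/2) ((3:ℝ)/2) ((5:ℝ)/2)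
  have hP : HasDerivAt (fun t => U t * (4 - 7 * Q t) - 3 * (1 - 2 * Q t)) _ l :=
    (hU.mul ((hQ.const_mul 7).const_sub 4)).sub (((hQ.const_mul 2).const_sub 1).const_mul 3)
  have hPR := (hP.congr_deriv (polytrope_five_logDeriv_eq hU0.ne' (sub_pos.2 hU1).ne' hQ0.ne'
    (sub_pos.2 hQ1).ne')).sub_const_mul_of_logDeriv hR (C := C) (by linear_combination hΦ0)
  convert hPR using 1
  funext t
  ring
end

section
/- For the planar system dU/dλ = U(1−U)[(1−Q)(3−4U) − n(λ) Q(1−U)], dQ/dλ = Q(1−Q)[(2U−1)(1−Q) + Q(1−U)] with 0 < U < 1, 0 < Q < 1 and arbitrary continuous n(λ), the function Φ(U,Q) = (4−7Q)U − 3(1−2Q) satisfies, at any point of the surface Φ = 0 (equivalently U = 3(1−2Q)/(4−7Q)), dΦ/dλ = 3(1−2Q)(1−U)² Q (5 − n(λ)). In particular, if n(λ) < 5 the flow crosses Φ = 0 in the direction of increasing Φ wherever Q < 1/2. -/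
/-!
Along the flow, `dΦ/dλ = (4 − 7Q) U' + (6 − 7U) Q'` (note `∂Φ/∂Q = −7U + 6`). Its difference
with `3(1 − 2Q)(1 − U)² Q (5 − n)` is a polynomial multiple of `Φ`, so the two agree on `Φ = 0`;
the sign of the right-hand side is then read off factor by factor.
-/

theorem phi_flow_derivative_eq_of_phi_eq_zero {R : Type*} [CommRing R] (u q n : R)
    (hsurf : (4 - 7 * q) * u - 3 * (1 - 2 * q) = 0) :
    (4 - 7 * q) * (u * (1 - u) * ((1 - q) * (3 - 4 * u) - n * q * (1 - u)))
      + (6 - 7 * u) * (q * (1 - q) * ((2 * u - 1) * (1 - q) + q * (1 - u)))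
      = 3 * (1 - 2 * q) * (1 - u) ^ 2 * q * (5 - n) := by
  linear_combination (-4 * q * u ^ 2 - n * q * u ^ 2 + 4 * u ^ 2 + 3 * q ^ 2 * u
    - 4 * q * u + 2 * n * q * u - 4 * u - 2 * q ^ 2 + 7 * q - n * q) * hsurf

theorem crossing_rate_pos {K : Type*} [Field K] [LinearOrder K] [IsStrictOrderedRing K]
    {u q n : K} (hu : u < 1) (hq : 0 < q) (hq2 : q < 1 / 2) (hn : n < 5) :
    0 < 3 * (1 - 2 * q) * (1 - u) ^ 2 * q * (5 - n) := by
  have h2q : 0 < 1 - 2 * q := by linarith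
  have hu' : 0 < 1 - u := sub_pos.mpr hu
  have hn' : 0 < 5 - n := sub_pos.mpr hn
  positivity

/-- On the surface `Φ(U,Q) = (4−7Q)U − 3(1−2Q) = 0` of the compactified
polytropic system, the derivative of `Φ` along the flow equals
`3(1−2Q)(1−U)² Q (5 − n)`; in particular for `n < 5` and `Q < 1/2` the flow
crosses the surface in the direction of increasing `Φ`. -/
theorem phi_surface_crossing
    (u q n : ℝ) (hu : 0 < u ∧ u < 1) (hq : 0 < q ∧ q < 1)
    (hsurf : (4 - 7 * q) * u - 3 * (1 - 2 * q) = 0) :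
    (4 - 7 * q) * (u * (1 - u) * ((1 - q) * (3 - 4 * u) - n * q * (1 - u)))
      + (6 - 7 * u) * (q * (1 - q) * ((2 * u - 1) * (1 - q) + q * (1 - u)))
      = 3 * (1 - 2 * q) * (1 - u) ^ 2 * q * (5 - n) ∧
    (n < 5 → q < 1 / 2 →
      0 < (4 - 7 * q) * (u * (1 - u) * ((1 - q) * (3 - 4 * u) - n * q * (1 - u)))
        + (6 - 7 * u) * (q * (1 - q) * ((2 * u - 1) * (1 - q) + q * (1 - u)))) := by
  have hrate := phi_flow_derivative_eq_of_phi_eq_zero u q n hsurf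
  refine ⟨hrate, fun hn hq2 => ?_⟩
  rw [hrate]
  exact crossing_rate_pos hu.2 hq.1 hq2 hn
end

section
/- Let n₀ ≤ 3 and consider the system dU/dλ = U(1−U)[(1−Q)(3−4U) − n(Ω) Q(1−U)], dQ/dλ = Q(1−Q)[(2U−1)(1−Q) + Q(1−U)], dΩ/dλ = −aΩ(1−Ω)Q(1−U), with a continuous index function n satisfying n(Ω) ≤ 3 for all Ω (e.g. in the polytropic subset Ω = 0 with n(0) = n₀). Then Z(U,Q) = (U/(1−U))·(Q/(1−Q))³ satisfies dZ/dλ = [2U(1−Q) + (3 − n(Ω)) Q(1−U)] Z ≥ 0 in the interior 0 < U < 1, 0 < Q < 1, with equality only if U = 0 and either Q = 0 or n(Ω) = 3. -/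
/-! The odds transform `x ↦ x / (1 - x)` turns a logistic factor into a logarithmic derivative:
if `x' = x (1 - x) g` then `(x / (1 - x))' = g · x / (1 - x)`. Hence `Z` has logarithmic derivative
`g_U + 3 g_Q`, which collapses to `2U(1 - Q) + (3 - n)Q(1 - U)`; in the interior the first term is
positive and the second nonnegative, and `Z > 0`, so `dZ/dλ > 0` there. -/

variable {𝕜 : Type*} [NontriviallyNormedField 𝕜]

theorem HasDerivAt.div_one_sub {f : 𝕜 → 𝕜} {f' t : 𝕜} (hf : HasDerivAt f f' t) (h1 : f t ≠ 1) :
    HasDerivAt (fun s => f s / (1 - f s)) (f' / (1 - f t) ^ 2) t := by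
  have h1' : 1 - f t ≠ 0 := sub_ne_zero.mpr h1.symm
  exact (hf.fun_div (hf.const_sub 1) h1').congr_deriv (by ring)

theorem HasDerivAt.div_one_sub_of_logistic {f : 𝕜 → 𝕜} {g t : 𝕜}
    (hf : HasDerivAt f (f t * (1 - f t) * g) t) (h1 : f t ≠ 1) :
    HasDerivAt (fun s => f s / (1 - f s)) (g * (f t / (1 - f t))) t := by
  have h1' : 1 - f t ≠ 0 := sub_ne_zero.mpr h1.symm
  exact (hf.div_one_sub h1).congr_deriv (by field_simp)

theorem Z_rate_pos {u q m : ℝ} (hu : 0 < u) (hu1 : u ≤ 1) (hq : 0 ≤ q) (hq1 : q < 1) (hm : m ≤ 3) :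
    0 < 2 * u * (1 - q) + (3 - m) * q * (1 - u) := by
  have hUQ : 0 < 2 * u * (1 - q) := by
    have : 0 < 1 - q := by linarith
    positivity
  have hnQ : 0 ≤ (3 - m) * q * (1 - u) :=
    mul_nonneg (mul_nonneg (by linarith) hq) (by linarith)
  linarith

theorem Z_pos {u q : ℝ} (hu : 0 < u) (hu1 : u < 1) (hq : 0 < q) (hq1 : q < 1) :
    0 < u / (1 - u) * (q / (1 - q)) ^ 3 := by
  have : 0 < 1 - u := by linarith
  have : 0 < 1 - q := by linarith
  positivity

theorem Z_monotone_general
    (n : ℝ → ℝ) (hn3 : ∀ x : ℝ, n x ≤ 3)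
    (U Q Ω : ℝ → ℝ) (l : ℝ)
    (hU01 : 0 < U l ∧ U l < 1) (hQ01 : 0 < Q l ∧ Q l < 1)
    (hU : HasDerivAt U
      (U l * (1 - U l) * ((1 - Q l) * (3 - 4 * U l) - n (Ω l) * Q l * (1 - U l))) l)
    (hQ : HasDerivAt Q
      (Q l * (1 - Q l) * ((2 * U l - 1) * (1 - Q l) + Q l * (1 - U l))) l) :
    HasDerivAt (fun t => (U t / (1 - U t)) * (Q t / (1 - Q t)) ^ 3)
      ((2 * U l * (1 - Q l) + (3 - n (Ω l)) * Q l * (1 - U l))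
        * ((U l / (1 - U l)) * (Q l / (1 - Q l)) ^ 3)) l ∧
    0 ≤ (2 * U l * (1 - Q l) + (3 - n (Ω l)) * Q l * (1 - U l))
        * ((U l / (1 - U l)) * (Q l / (1 - Q l)) ^ 3) ∧
    ((2 * U l * (1 - Q l) + (3 - n (Ω l)) * Q l * (1 - U l))
        * ((U l / (1 - U l)) * (Q l / (1 - Q l)) ^ 3) = 0 →
      U l = 0 ∧ (Q l = 0 ∨ n (Ω l) = 3)) := by
  obtain ⟨hU0, hU1⟩ := hU01
  obtain ⟨hQ0, hQ1⟩ := hQ01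
  have hoddsU := hU.div_one_sub_of_logistic hU1.ne
  have hoddsQ := hQ.div_one_sub_of_logistic hQ1.ne
  have hderiv := hoddsU.fun_mul (hoddsQ.fun_pow 3)
  have hpos := mul_pos (Z_rate_pos hU0 hU1.le hQ0.le hQ1 (hn3 (Ω l))) (Z_pos hU0 hU1 hQ0 hQ1)
  refine ⟨hderiv.congr_deriv (by push_cast; ring), hpos.le, fun h => absurd h hpos.ne'⟩

/-- For the compactified system with index function `n(Ω) ≤ 3`, the function
`Z = (U/(1−U))·(Q/(1−Q))³` satisfies
`dZ/dλ = [2U(1−Q) + (3−n(Ω))Q(1−U)]·Z ≥ 0` in the interior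
`0 < U < 1`, `0 < Q < 1`, with equality only if `U = 0` and either `Q = 0`
or `n(Ω) = 3`. -/
theorem Z_monotone
    (a : ℝ) (n : ℝ → ℝ) (hn3 : ∀ x : ℝ, n x ≤ 3)
    (U Q Ω : ℝ → ℝ) (l : ℝ)
    (hU01 : 0 < U l ∧ U l < 1) (hQ01 : 0 < Q l ∧ Q l < 1)
    (hU : HasDerivAt U
      (U l * (1 - U l) * ((1 - Q l) * (3 - 4 * U l) - n (Ω l) * Q l * (1 - U l))) l)
    (hQ : HasDerivAt Q
      (Q l * (1 - Q l) * ((2 * U l - 1) * (1 - Q l) + Q l * (1 - U l))) l)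
    (hΩ : HasDerivAt Ω (-a * Ω l * (1 - Ω l) * Q l * (1 - U l)) l) :
    HasDerivAt (fun t => (U t / (1 - U t)) * (Q t / (1 - Q t)) ^ 3)
      ((2 * U l * (1 - Q l) + (3 - n (Ω l)) * Q l * (1 - U l))
        * ((U l / (1 - U l)) * (Q l / (1 - Q l)) ^ 3)) l ∧
    0 ≤ (2 * U l * (1 - Q l) + (3 - n (Ω l)) * Q l * (1 - U l))
        * ((U l / (1 - U l)) * (Q l / (1 - Q l)) ^ 3) ∧
    ((2 * U l * (1 - Q l) + (3 - n (Ω l)) * Q l * (1 - U l))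
        * ((U l / (1 - U l)) * (Q l / (1 - Q l)) ^ 3) = 0 →
      U l = 0 ∧ (Q l = 0 ∨ n (Ω l) = 3)) :=
  Z_monotone_general n hn3 U Q Ω l hU01 hQ01 hU hQ
end

section
/- For the uncompactified system du/dξ = u(3 − u − n q), dq/dξ = q(−1 + u + q) with constant n > 3, the function Ψ(u,q) = (uq)^{2/(n−1)} [ (n−5)/(n−1)² + 2q/(n−1) − q²/2 − qu/(n+1) ] satisfies dΨ/dξ = (n−5)·(n−1)^{−3}·(uq)^{2/(n−1)}·(−2 + (n−1)q)² along solutions with u > 0, q > 0. In particular Ψ is a conserved quantity when n = 5, nondecreasing along orbits when n > 5, and nonincreasing when 3 < n < 5. -/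
open Real

/-!
Along the flow the logarithmic derivatives of `u` and `q` add up to that of `w = u q`, namely
`2 - (n - 1) q`; hence `(w ^ p)' = p (2 - (n - 1) q) w ^ p` with `p = 2 / (n - 1)`. Writing
`Ψ = w ^ p B(u, q)`, this gives `Ψ' = w ^ p (p (2 - (n - 1) q) B + B')`, and the bracket is a
polynomial in `u, q` that collapses to `(n - 5) (n - 1)⁻³ (2 - (n - 1) q) ^ 2`: the terms in `u`
cancel exactly.
-/

theorem HasDerivAt.mul_of_logDeriv_s7 {𝕜 : Type*} [NontriviallyNormedField 𝕜] {u q : 𝕜 → 𝕜}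
    {a b x : 𝕜} (hu : HasDerivAt u (u x * a) x) (hq : HasDerivAt q (q x * b) x) :
    HasDerivAt (fun t => u t * q t) (u x * q x * (a + b)) x :=
  (hu.mul hq).congr_deriv (by ring)

theorem HasDerivAt.rpow_const_of_logDeriv {w : ℝ → ℝ} {c x : ℝ} (p : ℝ)
    (hw : HasDerivAt w (w x * c) x) (hx : w x ≠ 0) :
    HasDerivAt (fun t => w t ^ p) (p * c * w x ^ p) x := by
  refine (hw.rpow_const (p := p) (Or.inl hx)).congr_deriv ?_
  rw [rpow_sub_one hx]
  field_simp

/-- The polynomial factor of `Ψ`, so that `Ψ = (u q) ^ (2 / (n - 1)) * psiBracket n u q`. -/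
noncomputable def psiBracket (n u q : ℝ) : ℝ :=
  (n - 5) / (n - 1) ^ 2 + 2 * q / (n - 1) - q ^ 2 / 2 - q * u / (n + 1)

theorem hasDerivAt_psiBracket {n : ℝ} {u q : ℝ → ℝ} {ξ u' q' : ℝ}
    (hu : HasDerivAt u u' ξ) (hq : HasDerivAt q q' ξ) :
    HasDerivAt (fun t => psiBracket n (u t) (q t))
      (2 * q' / (n - 1) - q ξ * q' - (q' * u ξ + q ξ * u') / (n + 1)) ξ :=
  ((((hq.const_mul 2).div_const (n - 1)).const_add _).sub ((hq.pow 2).div_const 2)).sub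
    ((hq.mul hu).div_const (n + 1)) |>.congr_deriv (by ring)

theorem psiBracket_identity {n : ℝ} (hn₁ : n - 1 ≠ 0) (hn₂ : n + 1 ≠ 0) (u q : ℝ) :
    2 / (n - 1) * (2 - (n - 1) * q) * psiBracket n u q
        + (2 * (q * (-1 + u + q)) / (n - 1) - q * (q * (-1 + u + q))
          - (q * (-1 + u + q) * u + q * (u * (3 - u - n * q))) / (n + 1))
      = (n - 5) * ((n - 1) ^ 3)⁻¹ * (-2 + (n - 1) * q) ^ 2 := by
  unfold psiBracket
  field_simp
  ring

/-- For the planar homology-invariant polytropic system with constant `n > 3`,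
the function `Ψ(u,q) = (uq)^{2/(n−1)}[(n−5)/(n−1)² + 2q/(n−1) − q²/2 − qu/(n+1)]`
satisfies `dΨ/dξ = (n−5)(n−1)^{−3}(uq)^{2/(n−1)}(−2+(n−1)q)²` along solutions
with `u, q > 0`; in particular `Ψ` is conserved for `n = 5`, nondecreasing
for `n > 5`, and nonincreasing for `3 < n < 5`. -/
theorem Psi_derivative
    (n : ℝ) (hn : 3 < n) (u q : ℝ → ℝ) (ξ : ℝ)
    (hupos : 0 < u ξ) (hqpos : 0 < q ξ)
    (hu : HasDerivAt u (u ξ * (3 - u ξ - n * q ξ)) ξ)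
    (hq : HasDerivAt q (q ξ * (-1 + u ξ + q ξ)) ξ) :
    HasDerivAt
      (fun t => (u t * q t) ^ (2 / (n - 1)) *
        ((n - 5) / (n - 1) ^ 2 + 2 * q t / (n - 1) - (q t) ^ 2 / 2
          - q t * u t / (n + 1)))
      ((n - 5) * ((n - 1) ^ 3)⁻¹ * (u ξ * q ξ) ^ (2 / (n - 1))
        * (-2 + (n - 1) * q ξ) ^ 2) ξ ∧
    (n = 5 → (n - 5) * ((n - 1) ^ 3)⁻¹ * (u ξ * q ξ) ^ (2 / (n - 1))
        * (-2 + (n - 1) * q ξ) ^ 2 = 0) ∧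
    (5 < n → 0 ≤ (n - 5) * ((n - 1) ^ 3)⁻¹ * (u ξ * q ξ) ^ (2 / (n - 1))
        * (-2 + (n - 1) * q ξ) ^ 2) ∧
    (n < 5 → (n - 5) * ((n - 1) ^ 3)⁻¹ * (u ξ * q ξ) ^ (2 / (n - 1))
        * (-2 + (n - 1) * q ξ) ^ 2 ≤ 0) := by
  have hw : 0 < u ξ * q ξ := mul_pos hupos hqpos
  have hpow := (hu.mul_of_logDeriv_s7 hq).rpow_const_of_logDeriv (2 / (n - 1)) hw.ne'
  have hΨ := hpow.mul (hasDerivAt_psiBracket (n := n) hu hq)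
  have hcoef : 0 ≤ ((n - 1) ^ 3)⁻¹ * (u ξ * q ξ) ^ (2 / (n - 1)) := by
    have : 0 < n - 1 := by linarith
    positivity
  refine ⟨hΨ.congr_deriv ?_, fun h => by simp [h], fun h => ?_, fun h => ?_⟩
  · linear_combination (u ξ * q ξ) ^ (2 / (n - 1))
      * psiBracket_identity (n := n) (by linarith) (by linarith) (u ξ) (q ξ)
  · have := mul_nonneg (mul_nonneg (sub_nonneg.2 h.le) hcoef) (sq_nonneg (-2 + (n - 1) * q ξ))
    linarith
  · have := mul_nonpos_of_nonpos_of_nonneg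
      (mul_nonpos_of_nonpos_of_nonneg (sub_nonpos.2 h.le) hcoef) (sq_nonneg (-2 + (n - 1) * q ξ))
    linarith
end

section
/- In the 3-dimensional compactified system dU/dλ = U(1−U)[(1−Q)(3−4U) − n(Ω)Q(1−U)], dQ/dλ = Q(1−Q)[(2U−1)(1−Q) + Q(1−U)], dΩ/dλ = −aΩ(1−Ω)Q(1−U), with n(Ω) ≥ 0 for all Ω: on the surface U = 3/4 one has dU/dλ = −(3/64) n(Ω) Q (1−Q) ≤ 0, and for 3/4 < U < 1 one has dU/dλ < 0 whenever 0 < Q < 1. Hence the region {U ≤ 3/4} ∩ [0,1]³ is forward invariant for interior orbits with Q ∈ (0,1). -/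
/-!
Above `U = 3/4` the term `(1 - Q)(3 - 4U)` is negative and `-n Q (1 - U)` is nonpositive, so
`dU/dλ ≤ 0` on the slab `3/4 ≤ U < 1`. An orbit leaving `{U ≤ 3/4}` would first have to enter this
slab, where `U` cannot grow. No strict inequality is available on the surface `U = 3/4` itself
(`n` may vanish), so the barrier argument is run against slightly tilted lines instead.
-/

open Set Filter Topology

theorem image_le_of_deriv_right_nonpos_of_mem_Ico {f f' : ℝ → ℝ} {a b c d : ℝ} (hcd : c < d)
    (hf : ContinuousOn f (Icc a b)) (hf' : ∀ x ∈ Ico a b, HasDerivWithinAt f (f' x) (Ici x) x)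
    (ha : f a ≤ c) (hd : ∀ x ∈ Ico a b, f x ∈ Ico c d → f' x ≤ 0) :
    ∀ ⦃x⦄, x ∈ Icc a b → f x ≤ c := by
  intro x hx
  have hline (t : ℝ) : Tendsto (fun ε : ℝ => c + ε * (t - a)) (𝓝[>] 0) (𝓝 c) :=
    tendsto_nhdsWithin_of_tendsto_nhds <|
      (by fun_prop : Continuous fun ε : ℝ => c + ε * (t - a)).tendsto' 0 c (by simp)
  -- Fence `f` by the lines `c + ε (t - a)`, which stay below `d` on `[a, b]` for small `ε > 0`.
  have hfence : ∀ᶠ ε in 𝓝[>] 0, f x ≤ c + ε * (x - a) := by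
    filter_upwards [(hline b).eventually_lt_const hcd, self_mem_nhdsWithin] with ε hε (hε₀ : 0 < ε)
    refine image_le_of_deriv_right_lt_deriv_boundary' hf hf' (by simpa using ha) (by fun_prop)
      (fun t _ => ((hasDerivAt_id' t).sub_const a |>.const_mul ε |>.const_add c).hasDerivWithinAt)
      ?_ hx
    intro t ht hft
    have hrise : ε * (t - a) ≤ ε * (b - a) := by gcongr; exact ht.2.le
    have hderiv := hd t ht ⟨by nlinarith [ht.1], by linarith⟩
    simpa using hderiv.trans_lt hε₀
  exact ge_of_tendsto (hline x) hfence

/-- `N` stands for `n(Ω)`. -/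
def fieldU (N u q : ℝ) : ℝ :=
  u * (1 - u) * ((1 - q) * (3 - 4 * u) - N * q * (1 - u))

theorem fieldU_three_quarters (N q : ℝ) : fieldU N (3/4) q = -(3/64) * N * q := by
  unfold fieldU; ring

theorem fieldU_nonpos {N u q : ℝ} (hN : 0 ≤ N) (hu : 3/4 ≤ u) (hu₁ : u ≤ 1) (hq : 0 ≤ q)
    (hq₁ : q ≤ 1) : fieldU N u q ≤ 0 := by
  have hflow : (1 - q) * (3 - 4 * u) ≤ 0 := mul_nonpos_of_nonneg_of_nonpos (by linarith) (by linarith)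
  have hdamp : 0 ≤ N * q * (1 - u) := by have := sub_nonneg.2 hu₁; positivity
  exact mul_nonpos_of_nonneg_of_nonpos (mul_nonneg (by linarith) (by linarith)) (by linarith)

theorem fieldU_neg {N u q : ℝ} (hN : 0 ≤ N) (hu : 3/4 < u) (hu₁ : u < 1) (hq : 0 ≤ q)
    (hq₁ : q < 1) : fieldU N u q < 0 := by
  have hflow : (1 - q) * (3 - 4 * u) < 0 := mul_neg_of_pos_of_neg (by linarith) (by linarith)
  have hdamp : 0 ≤ N * q * (1 - u) := by have := sub_nonneg.2 hu₁.le; positivity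
  exact mul_neg_of_pos_of_neg (mul_pos (by linarith) (by linarith)) (by linarith)

/-- In the compactified system with nonnegative index function `n`:
on the surface `U = 3/4` one has `dU/dλ = −(3/64) n(Ω) Q ≤ 0`, and for
`3/4 < U < 1`, `0 < Q < 1` one has `dU/dλ < 0`. Hence the region
`{U ≤ 3/4}` is forward invariant for interior orbits. -/
theorem region_U_le_three_quarters_invariant
    (n : ℝ → ℝ) (hn : ∀ x : ℝ, 0 ≤ n x) :
    (∀ q ω : ℝ, 0 < q → q < 1 →
      (3/4 : ℝ) * (1 - 3/4) * ((1 - q) * (3 - 4 * (3/4)) - n ω * q * (1 - 3/4))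
        = -(3/64) * n ω * q ∧
      (3/4 : ℝ) * (1 - 3/4) * ((1 - q) * (3 - 4 * (3/4)) - n ω * q * (1 - 3/4)) ≤ 0) ∧
    (∀ u q ω : ℝ, 3/4 < u → u < 1 → 0 < q → q < 1 →
      u * (1 - u) * ((1 - q) * (3 - 4 * u) - n ω * q * (1 - u)) < 0) ∧
    (∀ (U Q Ω : ℝ → ℝ),
      (∀ t : ℝ, HasDerivAt U
        (U t * (1 - U t) * ((1 - Q t) * (3 - 4 * U t) - n (Ω t) * Q t * (1 - U t))) t) →
      (∀ t : ℝ, 0 < Q t ∧ Q t < 1) →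
      ∀ t₀ : ℝ, U t₀ ≤ 3/4 → ∀ t : ℝ, t₀ ≤ t → U t ≤ 3/4) := by
  refine ⟨fun q ω hq hq₁ => ⟨fieldU_three_quarters _ _,
      fieldU_nonpos (hn ω) le_rfl (by norm_num) hq.le hq₁.le⟩,
    fun u q ω hu hu₁ hq hq₁ => fieldU_neg (hn ω) hu hu₁ hq.le hq₁, ?_⟩
  intro U Q Ω hU hQ t₀ h₀ t ht
  have hUcont : Continuous U := continuous_iff_continuousAt.2 fun s => (hU s).continuousAt
  refine image_le_of_deriv_right_nonpos_of_mem_Ico (d := 1) (by norm_num) hUcont.continuousOn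
    (fun s _ => (hU s).hasDerivWithinAt) h₀ (fun s _ hs => ?_) ⟨ht, le_rfl⟩
  exact fieldU_nonpos (hn (Ω s)) hs.1 hs.2.le (hQ s).1.le (hQ s).2.le
end

section
/- In the compactified system, Ω is strictly monotonically decreasing along every orbit in the open region 0 < U < 1, 0 < Q < 1, 0 < Ω < 1: dΩ/dλ = −aΩ(1−Ω)Q(1−U) < 0 there. Consequently no periodic orbit of the system lies entirely in this open region. -/
lemma omega_vectorField_neg {a u q ω : ℝ} (ha : 0 < a) (hu1 : u < 1) (hq : 0 < q)
    (hω : 0 < ω) (hω1 : ω < 1) : -a * ω * (1 - ω) * q * (1 - u) < 0 := by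
  have hpos : 0 < a * ω * (1 - ω) * q * (1 - u) :=
    mul_pos (mul_pos (mul_pos (mul_pos ha hω) (sub_pos.2 hω1)) hq) (sub_pos.2 hu1)
  linarith

/-- In the compactified system, `Ω` is strictly decreasing in the open region
`0 < U < 1`, `0 < Q < 1`, `0 < Ω < 1`: there
`dΩ/dλ = −aΩ(1−Ω)Q(1−U) < 0`. Consequently no periodic orbit lies entirely
in this open region. -/
theorem Omega_decreasing_no_periodic
    (a : ℝ) (ha : 0 < a) :
    (∀ u q ω : ℝ, 0 < u → u < 1 → 0 < q → q < 1 → 0 < ω → ω < 1 →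
      -a * ω * (1 - ω) * q * (1 - u) < 0) ∧
    (∀ (U Q Ω : ℝ → ℝ),
      (∀ t : ℝ, HasDerivAt Ω (-a * Ω t * (1 - Ω t) * Q t * (1 - U t)) t) →
      (∀ t : ℝ, 0 < U t ∧ U t < 1 ∧ 0 < Q t ∧ Q t < 1 ∧ 0 < Ω t ∧ Ω t < 1) →
      ∀ T : ℝ, 0 < T → Ω T ≠ Ω 0) := by
  refine ⟨fun u q ω _ hu1 hq _ hω hω1 => omega_vectorField_neg ha hu1 hq hω hω1, ?_⟩
  intro U Q Ω hderiv hregion T hT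
  have hanti : StrictAnti Ω := strictAnti_of_hasDerivAt_neg hderiv fun t => by
    obtain ⟨-, hU1, hQ, -, hΩ, hΩ1⟩ := hregion t
    exact omega_vectorField_neg ha hU1 hQ hΩ hΩ1
  exact (hanti hT).ne
end
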